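/- Work with bimodal symbolic dynamics (l = 2): symbols I_1, I_2, I_3, c_1, c_2, with signs ε(I_1) = ε(I_3) = +1, ε(I_2) = −1, ε(c_j) = 0. Let S ∈ A_I^n be a word of length n ≥ 1 whose first symbol is I_1 and such that the infinite sequence S I_2^∞ is minimal for the signed lexicographic order. Then for every sequence i_1 i_2 ⋯ ∈ Σ none of whose symbols is I_1 (each i_m ∈ {I_2, I_3, c_1, c_2}), and for every k ≥ n, the sequence S I_2^k i_1 i_2 ⋯ ∈ Σ is minimal. -/
import Mathlib


open Set

noncomputable section

/-- The bimodal itinerary alphabet: lap symbols `I1, I2, I3` and critical symbols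
`C1, C2`. -/
inductive BSym : Type
  | I1 | I2 | I3 | C1 | C2
deriving DecidableEq

/-- A symbol is critical if it is `C1` or `C2`. -/
def BSym.isCrit (s : BSym) : Prop := s = BSym.C1 ∨ s = BSym.C2

/-- Numerical value implementing the symbol ordering `I1 < c1 < I2 < c2 < I3`. -/
def BSym.val : BSym → ℤ
  | BSym.I1 => 0 | BSym.C1 => 1 | BSym.I2 => 2 | BSym.C2 => 3 | BSym.I3 => 4

/-- The sign `ε` of a symbol: `ε(I1) = ε(I3) = 1`, `ε(I2) = -1`, `ε(c_j) = 0`. -/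
def BSym.sgn : BSym → ℤ
  | BSym.I1 => 1 | BSym.I2 => -1 | BSym.I3 => 1 | BSym.C1 => 0 | BSym.C2 => 0

/-- The shift `σ^k`. -/
def shiftSeq (k : ℕ) (u : ℕ → BSym) : ℕ → BSym := fun m => u (m + k)

/-- The signed lexicographic (strict) order on itineraries. -/
def bLexLt (u v : ℕ → BSym) : Prop :=
  ∃ n : ℕ, (∀ i < n, u i = v i) ∧
    (u n).val * (∏ i ∈ Finset.range n, (u i).sgn) <
      (v n).val * (∏ i ∈ Finset.range n, (v i).sgn)

/-- The signed lexicographic order `⪯` on itineraries. -/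
def bLexLe (u v : ℕ → BSym) : Prop := u = v ∨ bLexLt u v

/-- `k` is a valid position of the sequence `u`, i.e. `k < |u|`: no critical (terminal)
symbol occurs strictly before position `k`. -/
def ValidPos (u : ℕ → BSym) (k : ℕ) : Prop := ∀ i < k, ¬ (u i).isCrit

/-- A sequence `u ∈ Σ` is encoded as a function `ℕ → BSym` which, from its first critical
symbol on (if any), is constant; this encodes finite sequences terminating in a critical
symbol by padding. -/
def Admissible (u : ℕ → BSym) : Prop :=
  ∀ n m : ℕ, n ≤ m → (u n).isCrit → u m = u n

/-- `u` is minimal: `u ⪯ σ^k u` for all `0 ≤ k < |u|`. -/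
def BMinimal (u : ℕ → BSym) : Prop :=
  ∀ k : ℕ, ValidPos u k → bLexLe u (shiftSeq k u)

/-- If `S` is a word of lap symbols of length `n ≥ 1` starting with `I1` such that
`S I2^∞` is minimal, then for every sequence `t ∈ Σ` containing no symbol `I1` and
every `k ≥ n`, the sequence `S I2^k t` is minimal. -/
theorem minimal_extension
    (n : ℕ) (hn : 1 ≤ n) (S : Fin n → BSym)
    (hlap : ∀ k : Fin n, ¬ (S k).isCrit)
    (hfirst : S ⟨0, hn⟩ = BSym.I1)
    (hmin : BMinimal (fun m => if h : m < n then S ⟨m, h⟩ else BSym.I2))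
    (t : ℕ → BSym) (ht : Admissible t) (htI1 : ∀ m, t m ≠ BSym.I1)
    (k : ℕ) (hk : n ≤ k) :
    BMinimal (fun m =>
      if h : m < n then S ⟨m, h⟩
      else if m < n + k then BSym.I2
      else t (m - (n + k))) := by
  set w : ℕ → BSym := fun m => if h : m < n then S ⟨m, h⟩ else BSym.I2 with hwdef
  set u : ℕ → BSym := (fun m =>
      if h : m < n then S ⟨m, h⟩
      else if m < n + k then BSym.I2
      else t (m - (n + k))) with hudef
  have hwI2 : ∀ m, n ≤ m → w m = BSym.I2 := by
    intro m hm
    rw [hwdef]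
    simp only
    rw [dif_neg (by omega)]
  have huw : ∀ m, m < n + k → u m = w m := by
    intro m hm
    rw [hudef, hwdef]
    simp only
    split_ifs with h1 h2 <;> first | rfl | omega
  have hwlap : ∀ m, ¬ (w m).isCrit := by
    intro m
    rw [hwdef]
    simp only
    split_ifs with h
    · exact hlap ⟨m, h⟩
    · rintro (h | h) <;> exact BSym.noConfusion h
  have hw0 : w 0 = BSym.I1 := by
    rw [hwdef]
    simp only
    split_ifs with h
    · exact hfirst
    · omega
  intro j _hj
  rcases Nat.eq_zero_or_pos j with hj0 | hj0
  · subst hj0; left; rfl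
  by_cases hI1 : u j = BSym.I1
  · -- hard case: u j = I1 forces j < n
    have hjn : j < n := by
      by_contra hge
      push_neg at hge
      rw [hudef] at hI1
      simp only at hI1
      split_ifs at hI1 with h1 h2 <;>
        first | omega | exact absurd hI1 (by decide) | exact htI1 _ hI1
    have hvalid : ValidPos w j := fun i _ => hwlap i
    rcases hmin j hvalid with heq | ⟨m, hpre, hstrict⟩
    · -- equality case is impossible: w would be periodic
      have hper : ∀ m, w m = w (m + j) := fun m => congrFun heq m
      have hr : ∀ r, w (r * j) = BSym.I1 := by
        intro r
        induction r with
        | zero => simpa using hw0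
        | succ r ih =>
          have h1 : (r + 1) * j = r * j + j := by ring
          rw [h1, ← hper]; exact ih
      have h2 : w (n * j) = BSym.I2 := hwI2 _ (Nat.le_mul_of_pos_right n hj0)
      exact absurd ((hr n).symm.trans h2) (by decide)
    · -- strict case: the witness position m is < n and transfers to u
      have hmn : m < n := by
        by_contra h
        push_neg at h
        have h1 : w m = BSym.I2 := hwI2 m h
        have h2 : shiftSeq j w m = BSym.I2 := hwI2 (m + j) (by omega)
        have hprod : ∏ i ∈ Finset.range m, (w i).sgn
            = ∏ i ∈ Finset.range m, ((shiftSeq j w) i).sgn :=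
          Finset.prod_congr rfl fun i hi => by
            rw [hpre i (Finset.mem_range.mp hi)]
        rw [h1, h2, hprod] at hstrict
        exact lt_irrefl _ hstrict
      right
      refine ⟨m, ?_, ?_⟩
      · intro i hi
        have e1 : u i = w i := huw i (by omega)
        have e2 : u (i + j) = w (i + j) := huw _ (by omega)
        show u i = u (i + j)
        rw [e1, e2]
        exact hpre i hi
      · have e1 : u m = w m := huw m (by omega)
        have e2 : u (m + j) = w (m + j) := huw _ (by omega)
        have hprod1 : ∏ i ∈ Finset.range m, (u i).sgn
            = ∏ i ∈ Finset.range m, (w i).sgn :=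
          Finset.prod_congr rfl fun i hi => by
            rw [huw i (by have := Finset.mem_range.mp hi; omega)]
        have hprod2 : ∏ i ∈ Finset.range m, ((shiftSeq j u) i).sgn
            = ∏ i ∈ Finset.range m, ((shiftSeq j w) i).sgn :=
          Finset.prod_congr rfl fun i hi => by
            show (u (i + j)).sgn = (w (i + j)).sgn
            rw [huw _ (by have := Finset.mem_range.mp hi; omega)]
        show (u m).val * (∏ i ∈ Finset.range m, (u i).sgn)
            < (u (m + j)).val * (∏ i ∈ Finset.range m, ((shiftSeq j u) i).sgn)
        rw [e1, e2, hprod1, hprod2]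
        exact hstrict
  · -- easy case: u 0 = I1 is strictly smaller than u j ≠ I1
    right
    refine ⟨0, fun i hi => absurd hi (Nat.not_lt_zero i), ?_⟩
    have hu0 : u 0 = BSym.I1 := by rw [huw 0 (by omega)]; exact hw0
    show (u 0).val * (∏ i ∈ Finset.range 0, (u i).sgn)
        < (u (0 + j)).val * (∏ i ∈ Finset.range 0, ((shiftSeq j u) i).sgn)
    simp only [Finset.prod_range_zero, mul_one]
    rw [hu0]
    show (0 : ℤ) < (u (0 + j)).val
    have : u (0 + j) = u j := by rw [Nat.zero_add]
    rw [this]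
    cases h : u j <;> first | (exact absurd h hI1) | (rw [h] at hI1; simp [BSym.val])
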